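/- Let G = A * B be the free product of two non-trivial groups A and B. If N is a subgroup of (the canonical image of) A which is subnormal in G, then N is the trivial subgroup. -/

import Mathlib

/-- A subgroup `N` of `G` is subnormal if there is a finite chain
`N = N₀ ≤ N₁ ≤ ⋯ ≤ N_k = G` with each `N_i` normal in `N_{i+1}`. -/
def IsSubnormal {G : Type*} [Group G] (N : Subgroup G) : Prop :=
  ∃ (k : ℕ) (s : ℕ → Subgroup G), s 0 = N ∧ s k = ⊤ ∧
    ∀ i < k, s i ≤ s (i + 1) ∧ ((s i).subgroupOf (s (i + 1))).Normal

/-!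
The image of `A` is malnormal in `A ∗ B`: if `a ≠ 1` and `y a y⁻¹` lies in `A`, then so does `y`.
Indeed, writing `y⁻¹ = h t` with `h ∈ A` and `t` a reduced word not starting in `A`, the element
`y a y⁻¹ = t⁻¹ (h⁻¹ a h) t` is a reduced word of length at least three unless `t` is empty.
Consequently, if a nontrivial `N ≤ A` is normal in `K`, each `y ∈ K` conjugates a nontrivial
element of `N` back into `A`, so `K ≤ A`. Climbing the subnormal series gives `A ∗ B ≤ A`, which
is impossible as `B` is nontrivial.
-/

open Function

theorem IsSubnormal.subgroup_isSubnormal {G : Type*} [Group G] {N : Subgroup G}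
    (hN : IsSubnormal N) : N.IsSubnormal := by
  obtain ⟨k, s, rfl, hk, hs⟩ := hN
  induction k generalizing s with
  | zero => exact hk ▸ .top
  | succ k ih =>
    exact .step _ _ (hs 0 k.succ_pos).1
      (ih (fun i => s (i + 1)) hk fun i hi => hs (i + 1) (by omega)) (hs 0 k.succ_pos).2

namespace Subgroup

variable {G H : Type*} [Group G] [Group H]

def IsMalnormal (M : Subgroup G) : Prop :=
  ∀ g : G, ∀ m ∈ M, m ≠ 1 → g * m * g⁻¹ ∈ M → g ∈ M

theorem IsMalnormal.comap {M : Subgroup H} (hM : M.IsMalnormal) {f : G →* H}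
    (hf : Injective f) : (M.comap f).IsMalnormal := fun g m hm hm1 hgm =>
  hM (f g) (f m) hm ((map_ne_one_iff f hf).2 hm1) (by simpa using hgm)

theorem IsMalnormal.le_of_normal_subgroupOf {M N K : Subgroup G} (hM : M.IsMalnormal)
    (hNM : N ≤ M) (hN : N ≠ ⊥) (hNK : N ≤ K) (hnormal : (N.subgroupOf K).Normal) :
    K ≤ M := by
  obtain ⟨n, hn, hn1⟩ := N.bot_or_exists_ne_one.resolve_left hN
  intro g hg
  have hconj : g * n * g⁻¹ ∈ N := by
    simpa [mem_subgroupOf] using hnormal.conj_mem ⟨n, hNK hn⟩ (by simpa) ⟨g, hg⟩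
  exact hM g n (hNM hn) hn1 (hNM hconj)

theorem IsSubnormal.eq_bot_of_le_of_isMalnormal {M N : Subgroup G} (hN : N.IsSubnormal)
    (hM : M.IsMalnormal) (hM_ne_top : M ≠ ⊤) (hNM : N ≤ M) : N = ⊥ := by
  induction hN with
  | top => exact absurd (top_le_iff.1 hNM) hM_ne_top
  | step N K hNK _ hnormal ih =>
    by_contra hN
    exact hN (le_bot_iff.1 (ih (hM.le_of_normal_subgroupOf hNM hN hNK hnormal) ▸ hNK))

end Subgroup

namespace Monoid.CoprodI

theorem Word.exists_pair_prod_eq {ι : Type*} {M : ι → Type*} [∀ i, Monoid (M i)] (i : ι)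
    (x : CoprodI M) : ∃ p : Word.Pair M i, of p.head * p.tail.prod = x := by
  classical
  refine ⟨Word.equivPair i (Word.equiv x), ?_⟩
  rw [← Word.prod_rcons, ← Word.equivPair_symm, Equiv.symm_apply_apply]
  exact Word.equiv.symm_apply_apply x

variable {ι : Type*} {G : ι → Type*} [∀ i, Group (G i)]

theorem NeWord.prod_notMem_range_of {i j k : ι} (w : NeWord G j k) (hw : 2 ≤ w.toList.length) :
    w.prod ∉ (of : G i →* CoprodI G).range := by
  classical
  rintro ⟨c, hc⟩
  have hinj : Injective (Word.prod : Word G → CoprodI G) := Word.equiv.symm.injective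
  by_cases hc1 : c = 1
  · have : w.toWord = Word.empty := hinj (by rw [Word.prod_empty, ← map_one of, ← hc1, hc]; rfl)
    exact w.toList_ne_nil (congrArg Word.toList this)
  · have : w.toWord = (NeWord.singleton c hc1).toWord :=
      hinj (by rw [← NeWord.prod, ← NeWord.prod, NeWord.prod_singleton, hc])
    have := congrArg (fun v => v.toList.length) this
    simp only [NeWord.toWord, NeWord.toList, List.length_singleton] at this
    omega

theorem Word.inv_prod_mul_of_mul_prod_notMem_range {i : ι} {t : Word G} (ht : t ≠ Word.empty)
    (hti : t.fstIdx ≠ some i) {a : G i} (ha : a ≠ 1) :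
    t.prod⁻¹ * of a * t.prod ∉ (of : G i →* CoprodI G).range := by
  obtain ⟨j, k, w, rfl⟩ := NeWord.of_word t ht
  have hji : j ≠ i := by
    rintro rfl
    exact hti (by simp [Word.fstIdx, NeWord.toWord])
  have hlen : 2 ≤ ((w.inv.append hji (.singleton a ha)).append hji.symm w).toList.length := by
    have := List.length_pos_iff.2 w.toList_ne_nil
    simp only [NeWord.toList, List.length_append, List.length_singleton]
    omega
  have := NeWord.prod_notMem_range_of (i := i) _ hlen
  rwa [NeWord.append_prod, NeWord.append_prod, NeWord.inv_prod, NeWord.prod_singleton] at this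

theorem isMalnormal_range_of (i : ι) : (of : G i →* CoprodI G).range.IsMalnormal := by
  rintro y _ ⟨a, rfl⟩ ha hy
  rw [ne_eq, map_eq_one_iff _ (of_injective i)] at ha
  obtain ⟨⟨h, t, hti⟩, hyt⟩ := Word.exists_pair_prod_eq i y⁻¹
  by_cases ht : t = Word.empty
  · subst ht
    exact inv_mem_iff.1 ⟨h, by simpa using hyt⟩
  · refine absurd ?_ (Word.inv_prod_mul_of_mul_prod_notMem_range ht hti
      (a := h⁻¹ * a * h) (by simpa using (conj_eq_one_iff (a := h⁻¹)).not.2 ha))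
    rw [eq_comm, inv_eq_iff_eq_inv] at hyt
    simpa [hyt, mul_assoc] using hy

end Monoid.CoprodI

namespace Monoid.Coprod

universe u v

variable (A : Type u) (B : Type v) [Group A] [Group B]

/-- The factors lifted to a common universe, so that `Coprod A B` embeds into an indexed free
product, where reduced words are available. -/
abbrev liftedFactors : Bool → Type (max u v) := fun b => cond b (ULift.{v} A) (ULift.{u} B)

instance : ∀ b, Group (liftedFactors A B b)
  | true => inferInstanceAs (Group (ULift A))
  | false => inferInstanceAs (Group (ULift B))

variable {A B}

def toCoprodI : Coprod A B →* CoprodI (liftedFactors A B) :=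
  lift ((CoprodI.of (i := true)).comp MulEquiv.ulift.symm.toMonoidHom)
    ((CoprodI.of (i := false)).comp MulEquiv.ulift.symm.toMonoidHom)

def ofCoprodI : CoprodI (liftedFactors A B) →* Coprod A B :=
  CoprodI.lift fun
    | true => inl.comp MulEquiv.ulift.toMonoidHom
    | false => inr.comp MulEquiv.ulift.toMonoidHom

theorem ofCoprodI_comp_toCoprodI : ofCoprodI.comp toCoprodI = MonoidHom.id (Coprod A B) := by
  ext <;> simp [ofCoprodI, toCoprodI]

theorem toCoprodI_injective : Injective (toCoprodI : Coprod A B →* _) :=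
  LeftInverse.injective (DFunLike.congr_fun ofCoprodI_comp_toCoprodI)

theorem range_inl_eq_comap_toCoprodI :
    (inl : A →* Coprod A B).range =
      (CoprodI.of : liftedFactors A B true →* _).range.comap toCoprodI := by
  ext x
  constructor
  · rintro ⟨a, rfl⟩
    exact ⟨ULift.up a, rfl⟩
  · rintro ⟨c, hc⟩
    exact ⟨c.down, toCoprodI_injective hc⟩

theorem isMalnormal_range_inl : (inl : A →* Coprod A B).range.IsMalnormal := by
  rw [range_inl_eq_comap_toCoprodI]
  exact (CoprodI.isMalnormal_range_of true).comap toCoprodI_injective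

theorem range_inl_ne_top [Nontrivial B] : (inl : A →* Coprod A B).range ≠ ⊤ := by
  obtain ⟨b, hb⟩ := exists_ne (1 : B)
  intro h
  obtain ⟨a, ha⟩ : inr b ∈ (inl : A →* Coprod A B).range := h ▸ Subgroup.mem_top _
  exact hb (by simpa using congrArg snd ha.symm)

end Monoid.Coprod

theorem subnormal_subgroup_of_factor_is_trivial_general {A B : Type*} [Group A] [Group B]
    [Nontrivial B]
    (N : Subgroup (Monoid.Coprod A B))
    (hNA : N ≤ (Monoid.Coprod.inl : A →* Monoid.Coprod A B).range)
    (hsub : IsSubnormal N) :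
    N = ⊥ :=
  hsub.subgroup_isSubnormal.eq_bot_of_le_of_isMalnormal Monoid.Coprod.isMalnormal_range_inl
    Monoid.Coprod.range_inl_ne_top hNA

/-- In a free product `G = A * B` of two non-trivial groups, a subgroup of the
canonical image of `A` which is subnormal in `G` must be trivial. -/
theorem subnormal_subgroup_of_factor_is_trivial {A B : Type*} [Group A] [Group B]
    [Nontrivial A] [Nontrivial B]
    (N : Subgroup (Monoid.Coprod A B))
    (hNA : N ≤ (Monoid.Coprod.inl : A →* Monoid.Coprod A B).range)
    (hsub : IsSubnormal N) :
    N = ⊥ :=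
  subnormal_subgroup_of_factor_is_trivial_general N hNA hsub
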